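/- arXiv:2001.04817 — 2 statements merged into one kernel-verified Lean document; each statement's English description precedes it below -/
import Mathlib

section
/- The number of parking functions of length n is (n+1)^{n-1}. -/
/-!
Pollak's circular argument. Read `f : Fin n → ZMod (n + 1)` as preferences on a circle of `n + 1`
spots and let `W m = #{entries among 0, …, m - 1} - m`, entries counted modulo `n + 1`. Since there
are `n` entries, `W (m + (n + 1)) = W m - 1`. The translate `f - t` is a parking function exactly
when `W` does not drop below `W t` during the next `n` steps, and by the drift there is exactly one
such `t` in a period: the first minimiser of `W` on `[0, n]`. So each orbit of `ZMod (n + 1)`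
acting by translation contains exactly one parking function, and `(n + 1) ^ n = (n + 1) · #PF`.
-/

open Finset

section CycleLemma

variable {N : ℕ} {P : ℕ → ℤ}

theorem exists_lt_forall_le_add (hP : ∀ m, P (m + N) = P m - 1) :
    ∃ t < N, ∀ d < N, P t ≤ P (t + d) := by
  classical
  have hN : 0 < N := Nat.pos_of_ne_zero fun h => by subst h; linarith [hP 0]
  have hmin : ∃ t < N, ∀ m < N, P t ≤ P m := by
    obtain ⟨t, ht, h⟩ := (range N).exists_min_image P ⟨0, mem_range.2 hN⟩
    exact ⟨t, mem_range.1 ht, fun m hm => h m (mem_range.2 hm)⟩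
  obtain ⟨ht₀N, ht₀⟩ := Nat.find_spec hmin
  have hlt : ∀ s < Nat.find hmin, P (Nat.find hmin) < P s := fun s hs => by
    obtain ⟨m, hm, hms⟩ : ∃ m < N, P m < P s := by
      simpa [hs.trans ht₀N] using Nat.find_min hmin hs
    exact (ht₀ m hm).trans_lt hms
  -- past `N`, `hP` compares with points before the first minimiser, where `P` is strictly larger
  refine ⟨Nat.find hmin, ht₀N, fun d hd => ?_⟩
  rcases lt_or_ge (Nat.find hmin + d) N with h | h
  · exact ht₀ _ h
  · have := hP (Nat.find hmin + d - N)
    rw [Nat.sub_add_cancel h] at this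
    linarith [hlt (Nat.find hmin + d - N) (by omega)]

theorem eq_of_forall_le_add (hP : ∀ m, P (m + N) = P m - 1) {t₁ t₂ : ℕ}
    (h₁N : t₁ < N) (h₂N : t₂ < N) (h₁ : ∀ d < N, P t₁ ≤ P (t₁ + d))
    (h₂ : ∀ d < N, P t₂ ≤ P (t₂ + d)) : t₁ = t₂ := by
  wlog h : t₁ < t₂ generalizing t₁ t₂
  · rcases (not_lt.1 h).lt_or_eq with h | h
    · exact (this h₂N h₁N h₂ h₁ h).symm
    · exact h.symm
  -- `P t₁ ≤ P t₂ ≤ P (t₁ + N) = P t₁ - 1`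
  have a := h₁ (t₂ - t₁) (by omega)
  have b := h₂ (t₁ + N - t₂) (by omega)
  rw [Nat.add_sub_cancel' h.le] at a
  rw [Nat.add_sub_cancel' (by omega), hP] at b
  omega

end CycleLemma

theorem card_filter_lt_eq_sum_card_filter_eq {ι : Type*} [Fintype ι] (v : ι → ℕ) (d : ℕ) :
    #{j | v j < d} = ∑ e ∈ range d, #{j | v j = e} := by
  rw [card_eq_sum_card_fiberwise (t := range d) (fun j hj => by simpa using hj)]
  refine sum_congr rfl fun e he => ?_
  rw [filter_filter]
  congr 1
  ext j
  simp only [mem_filter, mem_univ, true_and, and_iff_right_iff_imp]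
  rintro rfl
  simpa using he

theorem ZMod.val_eq_iff_eq_natCast {N e : ℕ} [NeZero N] (x : ZMod N) (he : e < N) :
    x.val = e ↔ x = e :=
  ⟨by rintro rfl; exact (ZMod.natCast_zmod_val x).symm,
   by rintro rfl; exact ZMod.val_natCast_of_lt he⟩

theorem AddAction.card_eq_card_mul_card_of_existsUnique_vadd_mem {G X : Type*} [AddGroup G]
    [AddAction G X] [Fintype G] [Fintype X] (S : Finset X) (hS : ∀ x : X, ∃! g : G, g +ᵥ x ∈ S) :
    Fintype.card X = #S * Fintype.card G := by
  have hbij : Function.Bijective fun p : S × G => p.2 +ᵥ (p.1 : X) := by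
    refine ⟨fun ⟨⟨s₁, hs₁⟩, g₁⟩ ⟨⟨s₂, hs₂⟩, g₂⟩ h => ?_, fun x => ?_⟩
    · obtain ⟨g, -, hg⟩ := hS (g₁ +ᵥ s₁)
      have hg₁ : -g₁ = g := hg _ (by simpa using hs₁)
      have hg₂ : -g₂ = g := hg _ (by simp only at h; simpa [h] using hs₂)
      obtain rfl : g₁ = g₂ := neg_injective (hg₁.trans hg₂.symm)
      simpa using h
    · obtain ⟨g, hg, -⟩ := hS x
      exact ⟨(⟨g +ᵥ x, hg⟩, -g), neg_vadd_vadd g x⟩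
  rw [← Fintype.card_of_bijective hbij, Fintype.card_prod, Fintype.card_coe]

namespace ParkingFunction

variable {n : ℕ}

/-- Preferences are `0`-based: `a j = k` means that car `j` prefers spot `k + 1`. -/
def IsParking (a : Fin n → ℕ) : Prop :=
  ∀ d ≤ n, d ≤ #{j | a j < d}

instance (a : Fin n → ℕ) : Decidable (IsParking a) :=
  inferInstanceAs (Decidable (∀ d ≤ n, d ≤ #{j | a j < d}))

def walk (f : Fin n → ZMod (n + 1)) (m : ℕ) : ℤ :=
  ∑ k ∈ range m, (#{j | f j = k} : ℤ) - m

theorem walk_add (f : Fin n → ZMod (n + 1)) (t d : ℕ) (hd : d ≤ n + 1) :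
    walk f (t + d) = walk f t + #{j | (f j - t).val < d} - d := by
  have hwindow : #{j | (f j - t).val < d} = ∑ e ∈ range d, #{j | f j = (t + e : ℕ)} := by
    rw [card_filter_lt_eq_sum_card_filter_eq]
    refine sum_congr rfl fun e he => ?_
    simp only [ZMod.val_eq_iff_eq_natCast _ ((mem_range.1 he).trans_le hd), sub_eq_iff_eq_add',
      Nat.cast_add]
  rw [hwindow, walk, walk, sum_range_add]
  push_cast
  ring

theorem walk_add_period (f : Fin n → ZMod (n + 1)) (m : ℕ) :
    walk f (m + (n + 1)) = walk f m - 1 := by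
  rw [walk_add f m _ le_rfl, filter_true_of_mem fun j _ => ZMod.val_lt _, card_univ,
    Fintype.card_fin]
  push_cast
  ring

theorem isParking_val_sub_iff (f : Fin n → ZMod (n + 1)) (t : ℕ) :
    IsParking (fun j => (f j - t).val) ↔ ∀ d < n + 1, walk f t ≤ walk f (t + d) := by
  simp only [IsParking, Nat.lt_succ_iff]
  refine forall₂_congr fun d hd => ?_
  rw [walk_add f t d (by omega)]
  omega

theorem existsUnique_isParking_add (f : Fin n → ZMod (n + 1)) :
    ∃! c : ZMod (n + 1), IsParking (fun j => (c + f j).val) := by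
  have hshift (c : ZMod (n + 1)) : (fun j => (c + f j).val) = fun j => (f j - (-c).val).val := by
    simp only [ZMod.natCast_zmod_val, sub_neg_eq_add, add_comm]
  simp only [hshift, isParking_val_sub_iff]
  obtain ⟨t, htN, ht⟩ := exists_lt_forall_le_add (walk_add_period f)
  refine ⟨-t, ?_, fun c hc => ?_⟩
  · simpa [ZMod.val_natCast_of_lt htN] using ht
  · rw [← neg_eq_iff_eq_neg, ← ZMod.natCast_zmod_val (-c),
      eq_of_forall_le_add (walk_add_period f) (ZMod.val_lt _) htN hc ht]

theorem lt_of_isParking {a : Fin n → ℕ} (ha : IsParking a) (j : Fin n) : a j < n := by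
  have hall : #{j | a j < n} = #(univ : Finset (Fin n)) :=
    le_antisymm (card_le_univ _) (by simpa using ha n le_rfl)
  simpa using card_filter_eq_iff.1 hall j (mem_univ j)

theorem isParking_val_iff (a : Fin n → Fin n) :
    IsParking (fun j => (a j : ℕ)) ↔ ∀ i : Fin n, (i : ℕ) + 1 ≤ #{j | a j ≤ i} := by
  have hfilter (i : Fin n) : #{j | a j ≤ i} = #{j | (a j : ℕ) < i + 1} := by
    simp only [Fin.le_def, Nat.lt_add_one_iff]
  refine ⟨fun ha i => hfilter i ▸ ha _ i.isLt, fun ha d hd => ?_⟩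
  rcases d with _ | d
  · exact Nat.zero_le _
  · exact hfilter ⟨d, hd⟩ ▸ ha ⟨d, hd⟩

theorem card_filter_isParking_val (n : ℕ) :
    #{a : Fin n → Fin n | IsParking fun j => (a j : ℕ)}
      = #{g : Fin n → ZMod (n + 1) | IsParking fun j => (g j).val} := by
  have hval (a : Fin n → Fin n) (j : Fin n) : ((a j : ℕ) : ZMod (n + 1)).val = a j :=
    ZMod.val_natCast_of_lt (Nat.lt_succ_of_lt (a j).isLt)
  refine card_bij' (fun a _ j => (a j : ℕ))
    (fun g hg j => ⟨(g j).val, lt_of_isParking (mem_filter.1 hg).2 j⟩) ?_ ?_ ?_ ?_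
  · intro a ha
    simpa [hval] using ha
  · intro g hg
    simpa using hg
  · intro a ha
    ext j
    exact hval a j
  · intro g hg
    ext j
    exact ZMod.natCast_zmod_val (g j)

end ParkingFunction

open ParkingFunction

/-- Konheim–Weiss: the number of parking functions of length `n`
(encoded as `a : Fin n → Fin n`, where `a j` stands for preference `a j + 1`,
and the static condition says at least `i + 1` entries are `≤ i`) is `(n+1)^(n-1)`. -/
theorem card_parking_functions (n : ℕ) :
    (Finset.univ.filter (fun a : Fin n → Fin n =>
      ∀ i : Fin n, (i : ℕ) + 1 ≤ (Finset.univ.filter (fun j => a j ≤ i)).card)).card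
      = (n + 1) ^ (n - 1) := by
  have hcount := AddAction.card_eq_card_mul_card_of_existsUnique_vadd_mem (G := ZMod (n + 1))
    {g : Fin n → ZMod (n + 1) | IsParking fun j => (g j).val}
    (fun f => by simpa using existsUnique_isParking_add f)
  simp only [Fintype.card_fun, ZMod.card, Fintype.card_fin] at hcount
  simp only [← isParking_val_iff, card_filter_isParking_val]
  refine Nat.eq_of_mul_eq_mul_right n.succ_pos (hcount.symm.trans ?_)
  cases n <;> simp [pow_succ]
end

section
/- Let d, m, n ∈ ℕ with n ≤ d·m. A 'clown function' is a sequence (a_1,...,a_n) ∈ [m]^n such that, when each clown i goes to car a_i and, if it already contains d clowns, proceeds forward to the next car with fewer than d clowns, all n clowns board a car. Then (a_1,...,a_n) is a clown function if and only if for every i ∈ [m], |{j : a_j > i}| ≤ d·(m − i). -/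
/-- First spot with index `≥ p` among `1,…,m` having fewer than `d` occupants. -/
def firstFreeCap (d m : ℕ) (occ : ℕ → ℕ) (p : ℕ) : Option ℕ :=
  let s := (Finset.Icc p m).filter (fun x => occ x < d)
  if h : s.Nonempty then some (s.min' h) else none

/-- The capacity-`d` boarding process on cars/spots `1,…,m`: returns `true`
iff every arrival finds a spot with remaining capacity at index `≥` its preference. -/
def boardOutcome (d m : ℕ) : List ℕ → (ℕ → ℕ) → Bool
  | [], _ => true
  | p :: ps, occ =>
    match firstFreeCap d m occ p with
    | none => false
    | some s => boardOutcome d m ps (Function.update occ s (occ s + 1))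

lemma firstFreeCap_eq_some {d m : ℕ} {occ : ℕ → ℕ} {p s : ℕ}
    (h : firstFreeCap d m occ p = some s) :
    p ≤ s ∧ s ≤ m ∧ occ s < d ∧ ∀ x, p ≤ x → x < s → d ≤ occ x := by
  simp only [firstFreeCap] at h
  by_cases hne : ((Finset.Icc p m).filter (fun x => occ x < d)).Nonempty
  · rw [dif_pos hne, Option.some_inj] at h
    subst h
    have hmem := Finset.min'_mem _ hne
    rw [Finset.mem_filter, Finset.mem_Icc] at hmem
    refine ⟨hmem.1.1, hmem.1.2, hmem.2, ?_⟩
    intro x hpx hxs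
    by_contra hcon
    push_neg at hcon
    have hx : x ∈ (Finset.Icc p m).filter (fun x => occ x < d) := by
      rw [Finset.mem_filter, Finset.mem_Icc]
      exact ⟨⟨hpx, le_trans (le_of_lt hxs) hmem.1.2⟩, hcon⟩
    exact absurd (Finset.min'_le _ x hx) (not_le.mpr hxs)
  · rw [dif_neg hne] at h; exact absurd h (by simp)

lemma firstFreeCap_eq_none {d m : ℕ} {occ : ℕ → ℕ} {p : ℕ}
    (h : firstFreeCap d m occ p = none) :
    ∀ x, p ≤ x → x ≤ m → d ≤ occ x := by
  simp only [firstFreeCap] at h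
  by_cases hne : ((Finset.Icc p m).filter (fun x => occ x < d)).Nonempty
  · rw [dif_pos hne] at h; exact absurd h (by simp)
  · intro x hpx hxm
    by_contra hcon
    push_neg at hcon
    exact hne ⟨x, by rw [Finset.mem_filter, Finset.mem_Icc]; exact ⟨⟨hpx, hxm⟩, hcon⟩⟩

lemma sum_update_occ (occ : ℕ → ℕ) (s : ℕ) (S : Finset ℕ) :
    ∑ x ∈ S, Function.update occ s (occ s + 1) x
      = (∑ x ∈ S, occ x) + (if s ∈ S then 1 else 0) := by
  rw [← Finset.sum_ite_eq' S s (fun _ => 1), ← Finset.sum_add_distrib]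
  apply Finset.sum_congr rfl
  intro x hx
  rcases eq_or_ne x s with rfl | hne
  · simp
  · simp [Function.update_of_ne hne, hne]

lemma board_false (d m : ℕ) : ∀ (l : List ℕ) (occ : ℕ → ℕ), (∀ x, occ x ≤ d) →
    ∀ i, i ≤ m →
    d * (m - i) < l.countP (fun x => decide (i < x)) + ∑ x ∈ Finset.Icc (i+1) m, occ x →
    boardOutcome d m l occ = false := by
  intro l
  induction l with
  | nil =>
    intro occ hocc i hi hlt
    exfalso
    have hb : ∑ x ∈ Finset.Icc (i+1) m, occ x ≤ d * (m - i) := by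
      calc ∑ x ∈ Finset.Icc (i+1) m, occ x ≤ ∑ _x ∈ Finset.Icc (i+1) m, d :=
            Finset.sum_le_sum (fun x _ => hocc x)
        _ = (m - i) * d := by rw [Finset.sum_const, smul_eq_mul, Nat.card_Icc]; congr 1; omega
        _ = d * (m - i) := mul_comm _ _
    simp only [List.countP_nil] at hlt
    omega
  | cons p ps ih =>
    intro occ hocc i hi hlt
    rw [boardOutcome]
    cases hf : firstFreeCap d m occ p with
    | none => rfl
    | some s =>
      obtain ⟨hps, hsm, hsd, _⟩ := firstFreeCap_eq_some hf
      simp only []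
      apply ih
      · intro x
        rcases eq_or_ne x s with rfl | hne
        · simpa using hsd
        · simpa [Function.update_of_ne hne] using hocc x
      · exact hi
      rw [sum_update_occ]
      rw [List.countP_cons] at hlt
      by_cases hip : i < p
      · have : s ∈ Finset.Icc (i+1) m := by rw [Finset.mem_Icc]; omega
        rw [if_pos this]
        simp only [decide_eq_true_eq] at hlt
        rw [if_pos hip] at hlt
        omega
      · simp only [decide_eq_true_eq] at hlt
        rw [if_neg hip] at hlt
        split <;> omega

lemma board_true (d m : ℕ) : ∀ (l : List ℕ) (occ : ℕ → ℕ),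
    (∀ x ∈ l, 1 ≤ x ∧ x ≤ m) →
    (∀ i, i ≤ m →
      l.countP (fun x => decide (i < x)) + ∑ x ∈ Finset.Icc (i+1) m, occ x ≤ d * (m - i)) →
    boardOutcome d m l occ = true := by
  intro l
  induction l with
  | nil => intro occ _ _; rfl
  | cons p ps ih =>
    intro occ hmem hinv
    obtain ⟨hp1, hpm⟩ := hmem p List.mem_cons_self
    rw [boardOutcome]
    cases hf : firstFreeCap d m occ p with
    | none =>
      exfalso
      have hfull := firstFreeCap_eq_none hf
      have h1 := hinv (p - 1) (by omega)
      have hIcc : Finset.Icc (p - 1 + 1) m = Finset.Icc p m := by congr 1; omega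
      rw [hIcc] at h1
      have hsum : d * (m - (p - 1)) ≤ ∑ x ∈ Finset.Icc p m, occ x := by
        calc d * (m - (p - 1)) = (Finset.Icc p m).card * d := by
              rw [Nat.card_Icc]; rw [mul_comm]; congr 1; omega
          _ = ∑ _x ∈ Finset.Icc p m, d := by rw [Finset.sum_const, smul_eq_mul]
          _ ≤ ∑ x ∈ Finset.Icc p m, occ x :=
              Finset.sum_le_sum (fun x hx => by
                rw [Finset.mem_Icc] at hx; exact hfull x hx.1 hx.2)
      have hcnt : 1 ≤ (p :: ps).countP (fun x => decide (p - 1 < x)) := by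
        rw [List.countP_cons]
        have hpp : p - 1 < p := by omega
        simp [hpp]
      omega
    | some s =>
      obtain ⟨hps, hsm, hsd, hmin⟩ := firstFreeCap_eq_some hf
      simp only []
      apply ih
      · intro x hx; exact hmem x (List.mem_cons_of_mem p hx)
      intro i hi
      rw [sum_update_occ]
      by_cases his : s ≤ i
      · rw [if_neg (by rw [Finset.mem_Icc]; omega)]
        have h1 := hinv i hi
        rw [List.countP_cons] at h1
        omega
      · rw [if_pos (by rw [Finset.mem_Icc]; omega)]
        push_neg at his
        by_cases hip : i < p
        · have h1 := hinv i hi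
          rw [List.countP_cons] at h1
          simp only [decide_eq_true_eq] at h1
          rw [if_pos hip] at h1
          omega
        · push_neg at hip
          -- p ≤ i < s : cars p..i are all full
          have h1 := hinv (p - 1) (by omega)
          rw [List.countP_cons] at h1
          have hd1 : (p - 1) < p := by omega
          simp only [decide_eq_true_eq] at h1
          rw [if_pos hd1] at h1
          have hIcc : Finset.Icc (p - 1 + 1) m = Finset.Icc p m := by congr 1; omega
          rw [hIcc] at h1
          -- split the sum
          have hsplit : ∑ x ∈ Finset.Icc p m, occ x
              = ∑ x ∈ Finset.Icc p i, occ x + ∑ x ∈ Finset.Icc (i+1) m, occ x := by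
            rw [← Finset.sum_union]
            · congr 1
              ext x
              simp only [Finset.mem_union, Finset.mem_Icc]
              omega
            · rw [Finset.disjoint_left]
              intro x hx hx'
              rw [Finset.mem_Icc] at hx hx'
              omega
          have hfullsum : d * (i - (p - 1)) ≤ ∑ x ∈ Finset.Icc p i, occ x := by
            calc d * (i - (p - 1)) = (Finset.Icc p i).card * d := by
                  rw [Nat.card_Icc, mul_comm]; congr 1; omega
              _ = ∑ _x ∈ Finset.Icc p i, d := by rw [Finset.sum_const, smul_eq_mul]
              _ ≤ ∑ x ∈ Finset.Icc p i, occ x :=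
                  Finset.sum_le_sum (fun x hx => by
                    rw [Finset.mem_Icc] at hx; exact hmin x hx.1 (by omega))
          have hkey : d * (m - (p - 1)) = d * (m - i) + d * (i - (p - 1)) := by
            rw [← Nat.mul_add]; congr 1; omega
          have hmono : ps.countP (fun x => decide (i < x))
              ≤ ps.countP (fun x => decide (p - 1 < x)) := by
            apply List.countP_mono_left
            intro x _ hx
            simp only [decide_eq_true_eq] at hx ⊢
            omega
          omega

lemma countP_ofFn {n : ℕ} (a : Fin n → ℕ) (i : ℕ) :
    (List.ofFn a).countP (fun x => decide (i < x))
      = (Finset.univ.filter (fun j => i < a j)).card := by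
  induction n with
  | zero => simp
  | succ n ih =>
    rw [List.ofFn_succ, List.countP_cons, ih (fun j => a j.succ)]
    rw [Finset.card_filter, Finset.card_filter, Fin.sum_univ_succ]
    simp only [decide_eq_true_eq]
    omega

/-- Clown-car characterization: with `m` cars of capacity `d` and `n ≤ d·m` clowns,
all clowns board iff for every `i ∈ [m]` the number of clowns preferring a car
beyond `i` is at most `d·(m - i)`. -/
theorem clown_function_iff (d m n : ℕ) (hn : n ≤ d * m) (a : Fin n → ℕ)
    (ha : ∀ j, a j ∈ Finset.Icc 1 m) :
    boardOutcome d m (List.ofFn a) (fun _ => 0) = true ↔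
      ∀ i ∈ Finset.Icc 1 m,
        (Finset.univ.filter (fun j => i < a j)).card ≤ d * (m - i) := by
  constructor
  · intro hb i hi
    rw [Finset.mem_Icc] at hi
    by_contra hcon
    push_neg at hcon
    have := board_false d m (List.ofFn a) (fun _ => 0) (fun _ => Nat.zero_le d) i hi.2
      (by rw [countP_ofFn]; simpa using hcon)
    rw [hb] at this
    exact absurd this (by simp)
  · intro hcond
    apply board_true
    · intro x hx
      rw [List.mem_ofFn] at hx
      obtain ⟨j, rfl⟩ := hx
      have := ha j
      rw [Finset.mem_Icc] at this
      exact this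
    · intro i hi
      simp only [Finset.sum_const_zero, add_zero]
      rcases Nat.eq_zero_or_pos i with rfl | hi1
      · calc (List.ofFn a).countP (fun x => decide (0 < x)) ≤ (List.ofFn a).length :=
              List.countP_le_length
          _ = n := by rw [List.length_ofFn]
          _ ≤ d * m := hn
          _ = d * (m - 0) := by simp
      · rw [countP_ofFn]
        exact hcond i (Finset.mem_Icc.mpr ⟨hi1, hi⟩)
end
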